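/- Suppose the setup s is obviously inconsistent. Then there is no world w such that w satisfies every clause of s. -/

import Mathlib

set_option maxHeartbeats 1000000

/-! ### Ground level: sorts, names, primitive terms, ground literals, worlds -/

/-- Sorts. -/
abbrev SSort := ℕ

/-- Standard names: countably infinitely many of each sort. -/
structure Name where
  sort : SSort
  idx : ℕ
deriving DecidableEq

/-- Function symbols: for each sort and arity, countably infinitely many. -/
structure FnSym where
  sort : SSort
  arity : ℕ
  idx : ℕ
deriving DecidableEq

/-- A primitive term: a function symbol applied to standard names. -/
structure PrimTerm where
  fn : FnSym
  args : List Name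
deriving DecidableEq

def PrimTerm.sort (t : PrimTerm) : SSort := t.fn.sort

/-- A ground term: a standard name or a primitive term. -/
inductive GTerm
  | name (n : Name)
  | prim (t : PrimTerm)
deriving DecidableEq

def GTerm.sort : GTerm → SSort
  | .name n => n.sort
  | .prim t => t.sort

/-- A ground literal `t = n` (`pos = true`) or `t ≠ n` (`pos = false`),
    where `t` is a standard name or a primitive term and `n` is a standard name. -/
structure GLit where
  pos : Bool
  lhs : GTerm
  rhs : Name
deriving DecidableEq

/-- The negation `¬ℓ` of a ground literal. -/
def GLit.negate (l : GLit) : GLit := ⟨!l.pos, l.lhs, l.rhs⟩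

/-- A world: a sort-preserving assignment of standard names to primitive terms. -/
structure World where
  val : PrimTerm → Name
  sort_eq : ∀ t, (val t).sort = t.sort

/-- The equality `t = n` holds in world `w`. -/
def World.eqHolds (w : World) : GTerm → Name → Prop
  | .name m, n => m = n
  | .prim t, n => w.val t = n

/-- World `w` satisfies the ground literal `l`. -/
def World.satLit (w : World) (l : GLit) : Prop :=
  if l.pos then w.eqHolds l.lhs l.rhs else ¬ w.eqHolds l.lhs l.rhs

/-- A ground literal is valid: it is of the form `t = t`, or `n ≠ n'` for distinct
    names `n, n'`, or `t ≠ n` for `t, n` of distinct sorts. -/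
def GLit.valid (l : GLit) : Prop :=
  (l.pos = true ∧ l.lhs = GTerm.name l.rhs) ∨
  (l.pos = false ∧ ∃ n : Name, l.lhs = GTerm.name n ∧ n ≠ l.rhs) ∨
  (l.pos = false ∧ l.lhs.sort ≠ l.rhs.sort)

/-- `l1` subsumes `l2`: they are identical, or of the form `t = n1` and `t ≠ n2`
    for distinct names `n1, n2`. -/
def GLit.subsumes (l1 l2 : GLit) : Prop :=
  l1 = l2 ∨
  (l1.pos = true ∧ l2.pos = false ∧ l1.lhs = l2.lhs ∧ l1.rhs ≠ l2.rhs)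

/-- `l1`, `l2` are complementary: of the form `t = t'` and `t ≠ t'` (in either order),
    or of the form `t = n1` and `t = n2` for distinct names `n1, n2`. -/
def GLit.compl (l1 l2 : GLit) : Prop :=
  (l1.lhs = l2.lhs ∧ l1.rhs = l2.rhs ∧ l1.pos ≠ l2.pos) ∨
  (l1.pos = true ∧ l2.pos = true ∧ l1.lhs = l2.lhs ∧ l1.rhs ≠ l2.rhs)

/-! ### Clauses and setups -/

/-- A clause: a finite set of ground literals. -/
abbrev Clause := Finset GLit

/-- World `w` satisfies clause `c` iff it satisfies some literal of `c`. -/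
def World.satClause (w : World) (c : Clause) : Prop := ∃ l ∈ c, w.satLit l

/-- A clause is valid when it contains a valid literal, or a literal `t = n` together
    with `t ≠ n`, or two literals `t ≠ n1`, `t ≠ n2` for distinct `n1, n2`. -/
def Clause.valid (c : Clause) : Prop :=
  (∃ l ∈ c, l.valid) ∨
  (∃ l1 ∈ c, ∃ l2 ∈ c,
    l1.pos = true ∧ l2.pos = false ∧ l1.lhs = l2.lhs ∧ l1.rhs = l2.rhs) ∨
  (∃ l1 ∈ c, ∃ l2 ∈ c,
    l1.pos = false ∧ l2.pos = false ∧ l1.lhs = l2.lhs ∧ l1.rhs ≠ l2.rhs)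

/-- Clause subsumption: every literal of `c1` subsumes some literal of `c2`. -/
def Clause.subsumes (c1 c2 : Clause) : Prop :=
  ∀ l1 ∈ c1, ∃ l2 ∈ c2, l1.subsumes l2

/-- The unit propagation of clause `c` with literal `l`: remove from `c` all literals
    complementary to `l`. -/
noncomputable def Clause.unitProp (c : Clause) (l : GLit) : Clause :=
  @Finset.filter _ (fun l' => ¬ l'.compl l) (Classical.decPred _) c

/-- A setup: a set of ground clauses. -/
abbrev Setup := Set Clause

/-- `UP s`: the closure of `s` together with all valid (unit clauses of) literals
    under unit propagation. -/
inductive UPmem (s : Setup) : Clause → Prop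
  | base {c : Clause} : c ∈ s → UPmem s c
  | validLit {l : GLit} : l.valid → UPmem s {l}
  | unitProp {c : Clause} {l : GLit} :
      UPmem s c → UPmem s {l} → UPmem s (c.unitProp l)

def UP (s : Setup) : Setup := {c | UPmem s c}

/-- `MaxS s`: `s` together with all valid clauses and all clauses subsumed by some
    clause of `s`. -/
def MaxS (s : Setup) : Setup :=
  s ∪ {c | c.valid} ∪ {c | ∃ c' ∈ s, Clause.subsumes c' c}

def VP (s : Setup) : Setup := MaxS (UP s)

/-- `MinS s`: remove from `s` all valid clauses and all clauses subsumed by some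
    other clause of `VP s`. -/
def MinS (s : Setup) : Setup :=
  {c | c ∈ s ∧ ¬ c.valid ∧ ¬ ∃ c' ∈ VP s, c' ≠ c ∧ Clause.subsumes c' c}

def WP (s : Setup) : Setup := MinS (UP s)

/-- A setup is obviously inconsistent when `UP s` contains the empty clause. -/
def obviouslyIncons (s : Setup) : Prop := (∅ : Clause) ∈ UP s

/-- The set of all literals occurring in clauses of `WP s`. -/
def litsOfWP (s : Setup) : Set GLit := {l | ∃ c ∈ WP s, l ∈ c}

/-- A setup is potentially inconsistent. -/
def potentiallyIncons (s : Setup) : Prop :=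
  obviouslyIncons s ∨
  (∃ l1 ∈ litsOfWP s, ∃ l2 ∈ litsOfWP s, GLit.compl l1 l2) ∨
  (∃ l ∈ litsOfWP s, l.pos = true ∧ l.rhs.sort ≠ l.lhs.sort) ∨
  (∃ t : PrimTerm, ∀ n : Name, n.sort = t.sort →
    (⟨false, GTerm.prim t, n⟩ : GLit) ∈ litsOfWP s)

/-! ### Syntax: variables, terms, atoms -/

/-- Variables, countably infinitely many of each sort. -/
structure Var where
  sort : SSort
  idx : ℕ
deriving DecidableEq

/-- A variable or a name (possible argument of a function, and right-hand side
    of a literal). -/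
inductive Atomic
  | var (x : Var)
  | name (n : Name)
deriving DecidableEq

/-- Left-hand side of a literal: a variable, a name, or a function applied to
    variables and names. -/
inductive LTerm
  | var (x : Var)
  | name (n : Name)
  | app (f : FnSym) (args : List Atomic)
deriving DecidableEq

/-- An (equality) atom `t1 = t2`. -/
structure Atom where
  lhs : LTerm
  rhs : Atomic
deriving DecidableEq

def Atomic.subst (x : Var) (n : Name) : Atomic → Atomic
  | .var y => if y = x then .name n else .var y
  | .name m => .name m

def LTerm.subst (x : Var) (n : Name) : LTerm → LTerm
  | .var y => if y = x then .name n else .var y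
  | .name m => .name m
  | .app f args => .app f (args.map (Atomic.subst x n))

def Atom.subst (x : Var) (n : Name) (a : Atom) : Atom :=
  ⟨a.lhs.subst x n, a.rhs.subst x n⟩

def Atomic.toName? : Atomic → Option Name
  | .var _ => none
  | .name n => some n

def LTerm.toGTerm? : LTerm → Option GTerm
  | .var _ => none
  | .name n => some (.name n)
  | .app f args => (args.mapM Atomic.toName?).map (fun ns => .prim ⟨f, ns⟩)

/-- The ground literal corresponding to an atom (with the given polarity), if the
    atom is ground. -/
def Atom.toGLit? (pos : Bool) (a : Atom) : Option GLit :=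
  a.lhs.toGTerm?.bind fun t => a.rhs.toName?.map fun n => ⟨pos, t, n⟩

def Atomic.vars : Atomic → Set Var
  | .var x => {x}
  | .name _ => ∅

def LTerm.vars : LTerm → Set Var
  | .var x => {x}
  | .name _ => ∅
  | .app _ args => {x | ∃ a ∈ args, x ∈ a.vars}

def Atom.vars (a : Atom) : Set Var := a.lhs.vars ∪ a.rhs.vars

/-- Sort-preserving assignments of names to variables. -/
def sortPreserving (σ : Var → Name) : Prop := ∀ x, (σ x).sort = x.sort

def Atomic.applySub (σ : Var → Name) : Atomic → Name
  | .var x => σ x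
  | .name n => n

def LTerm.applySub (σ : Var → Name) : LTerm → GTerm
  | .var x => .name (σ x)
  | .name n => .name n
  | .app f args => .prim ⟨f, args.map (Atomic.applySub σ)⟩

/-- The ground literal obtained from an atom by grounding all variables via `σ`. -/
def Atom.applySub (σ : Var → Name) (pos : Bool) (a : Atom) : GLit :=
  ⟨pos, a.lhs.applySub σ, Atomic.applySub σ a.rhs⟩

/-! ### The logic L -/

/-- Formulas of the logic L. -/
inductive LFormula
  | atom (a : Atom)
  | neg (α : LFormula)
  | or (α β : LFormula)
  | ex (x : Var) (α : LFormula)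
  | K (α : LFormula)
  | M (α : LFormula)
  | O (α : LFormula)

namespace LFormula

def subst (x : Var) (n : Name) : LFormula → LFormula
  | atom a => atom (a.subst x n)
  | neg α => neg (α.subst x n)
  | or α β => or (α.subst x n) (β.subst x n)
  | ex y α => if y = x then ex y α else ex y (α.subst x n)
  | K α => K (α.subst x n)
  | M α => M (α.subst x n)
  | O α => O (α.subst x n)

/-- Free variables. -/
def free : LFormula → Set Var
  | atom a => a.vars
  | neg α => α.free
  | or α β => α.free ∪ β.free
  | ex x α => α.free \ {x}
  | K α => α.free
  | M α => α.free
  | O α => α.free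

/-- Objective: mentions no modal operator. -/
def objective : LFormula → Prop
  | atom _ => True
  | neg α => α.objective
  | or α β => α.objective ∧ β.objective
  | ex _ α => α.objective
  | K _ => False
  | M _ => False
  | O _ => False

def fsize : LFormula → ℕ
  | atom _ => 1
  | neg α => α.fsize + 1
  | or α β => α.fsize + β.fsize + 1
  | ex _ α => α.fsize + 1
  | K α => α.fsize + 1
  | M α => α.fsize + 1
  | O α => α.fsize + 1

theorem fsize_subst (x : Var) (n : Name) :
    ∀ α : LFormula, (α.subst x n).fsize = α.fsize := by
  intro α
  induction α with
  | atom a => rfl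
  | neg α ih => simp [subst, fsize, ih]
  | or α β ih1 ih2 => simp [subst, fsize, ih1, ih2]
  | ex y α ih =>
    simp only [subst]
    split <;> simp [fsize, ih]
  | K α ih => simp [subst, fsize, ih]
  | M α ih => simp [subst, fsize, ih]
  | O α ih => simp [subst, fsize, ih]

/-- Abbreviation: conjunction. -/
def and (α β : LFormula) : LFormula := neg (or (neg α) (neg β))

/-- Abbreviation: implication. -/
def imp (α β : LFormula) : LFormula := or (neg α) β

/-- Abbreviation: equivalence. -/
def equi (α β : LFormula) : LFormula := (α.imp β).and (β.imp α)

/-- Abbreviation: universal quantification. -/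
def fa (x : Var) (α : LFormula) : LFormula := neg (ex x (neg α))

end LFormula

/-- Semantics of L. -/
def LSat : Set World → World → LFormula → Prop
  | _, w, .atom a =>
    match a.toGLit? true with
    | some g => w.satLit g
    | none => False
  | e, w, .neg α => ¬ LSat e w α
  | e, w, .or α β => LSat e w α ∨ LSat e w β
  | e, w, .ex x α => ∃ n : Name, n.sort = x.sort ∧ LSat e w (α.subst x n)
  | e, _, .K α => ∀ w' ∈ e, LSat e w' α
  | e, _, .M α => ∃ w' ∈ e, LSat e w' α
  | e, _, .O α => e = {w' | LSat e w' α}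
termination_by e w α => α.fsize
decreasing_by
  all_goals simp only [LFormula.fsize, LFormula.fsize_subst]
  all_goals omega

/-- Validity in L. -/
def LValid (α : LFormula) : Prop := ∀ (e : Set World) (w : World), LSat e w α

/-- Entailment in L. -/
def LEntails (α β : LFormula) : Prop :=
  ∀ (e : Set World) (w : World), LSat e w α → LSat e w β

/-! ### The logic LL -/

/-- Formulas of the logic LL. -/
inductive LLFormula
  | atom (a : Atom)
  | neg (α : LLFormula)
  | or (α β : LLFormula)
  | ex (x : Var) (α : LLFormula)
  | K (k : ℕ) (α : LLFormula)
  | M (k : ℕ) (α : LLFormula)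
  | O (α : LLFormula)
  | G (α : LLFormula)

namespace LLFormula

def subst (x : Var) (n : Name) : LLFormula → LLFormula
  | atom a => atom (a.subst x n)
  | neg α => neg (α.subst x n)
  | or α β => or (α.subst x n) (β.subst x n)
  | ex y α => if y = x then ex y α else ex y (α.subst x n)
  | K k α => K k (α.subst x n)
  | M k α => M k (α.subst x n)
  | O α => O (α.subst x n)
  | G α => G (α.subst x n)

/-- Free variables. -/
def free : LLFormula → Set Var
  | atom a => a.vars
  | neg α => α.free
  | or α β => α.free ∪ β.free
  | ex x α => α.free \ {x}
  | K _ α => α.free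
  | M _ α => α.free
  | O α => α.free
  | G α => α.free

/-- Objective: mentions no modal operator. -/
def objective : LLFormula → Prop
  | atom _ => True
  | neg α => α.objective
  | or α β => α.objective ∧ β.objective
  | ex _ α => α.objective
  | K _ _ => False
  | M _ _ => False
  | O _ => False
  | G _ => False

/-- Subjective: mentions no function application outside a modal operator. -/
def subjective : LLFormula → Prop
  | atom a => ∀ (f : FnSym) (args : List Atomic), a.lhs ≠ LTerm.app f args
  | neg α => α.subjective
  | or α β => α.subjective ∧ β.subjective
  | ex _ α => α.subjective
  | K _ _ => True
  | M _ _ => True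
  | O _ => True
  | G _ => True

/-- Propositional: mentions no quantifier. -/
def propositional : LLFormula → Prop
  | atom _ => True
  | neg α => α.propositional
  | or α β => α.propositional ∧ β.propositional
  | ex _ _ => False
  | K _ α => α.propositional
  | M _ α => α.propositional
  | O α => α.propositional
  | G α => α.propositional

/-- Mentions no `O`. -/
def noO : LLFormula → Prop
  | atom _ => True
  | neg α => α.noO
  | or α β => α.noO ∧ β.noO
  | ex _ α => α.noO
  | K _ α => α.noO
  | M _ α => α.noO
  | O _ => False
  | G α => α.noO

/-- Mentions no `G`. -/
def noG : LLFormula → Prop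
  | atom _ => True
  | neg α => α.noG
  | or α β => α.noG ∧ β.noG
  | ex _ α => α.noG
  | K _ α => α.noG
  | M _ α => α.noG
  | O α => α.noG
  | G _ => False

/-- Mentions no `K_k` and no `M_k`. -/
def kmFree : LLFormula → Prop
  | atom _ => True
  | neg α => α.kmFree
  | or α β => α.kmFree ∧ β.kmFree
  | ex _ α => α.kmFree
  | K _ _ => False
  | M _ _ => False
  | O α => α.kmFree
  | G α => α.kmFree

/-- No `K_k` or `M_k` occurs in the scope of a negation. -/
def noNegatedKM : LLFormula → Prop
  | atom _ => True
  | neg α => α.kmFree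
  | or α β => α.noNegatedKM ∧ β.noNegatedKM
  | ex _ α => α.noNegatedKM
  | K _ α => α.noNegatedKM
  | M _ α => α.noNegatedKM
  | O α => α.noNegatedKM
  | G α => α.noNegatedKM

/-- Replace every `K_l`/`M_l` by `K_k`/`M_k`. -/
def setLevel (k : ℕ) : LLFormula → LLFormula
  | atom a => atom a
  | neg α => neg (α.setLevel k)
  | or α β => or (α.setLevel k) (β.setLevel k)
  | ex x α => ex x (α.setLevel k)
  | K _ α => K k (α.setLevel k)
  | M _ α => M k (α.setLevel k)
  | O α => O (α.setLevel k)
  | G α => G (α.setLevel k)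

/-- The translation `σ_L` from LL to L: replace every `K_k`/`M_k` by `K`/`M`. -/
def toL : LLFormula → LFormula
  | atom a => .atom a
  | neg α => .neg α.toL
  | or α β => .or α.toL β.toL
  | ex x α => .ex x α.toL
  | K _ α => .K α.toL
  | M _ α => .M α.toL
  | O α => .O α.toL
  | G α => α.toL

/-- The ground literal denoted by a formula, if it is a ground literal. -/
def asLit? : LLFormula → Option GLit
  | atom a => a.toGLit? true
  | neg (atom a) => a.toGLit? false
  | _ => none

/-- The clause denoted by a formula, if it is a disjunction of ground literals. -/
def asClause? : LLFormula → Option Clause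
  | or α β => α.asClause?.bind fun c1 => β.asClause?.map fun c2 => c1 ∪ c2
  | α => α.asLit?.map fun g => ({g} : Clause)

/-- The atoms mentioned in a formula. -/
def atoms : LLFormula → Set Atom
  | atom a => {a}
  | neg α => α.atoms
  | or α β => α.atoms ∪ β.atoms
  | ex _ α => α.atoms
  | K _ α => α.atoms
  | M _ α => α.atoms
  | O α => α.atoms
  | G α => α.atoms

/-- The primitive terms occurring in `gnd α`, the groundings of `α`. -/
def primTerms (α : LLFormula) : Set PrimTerm :=
  {p | ∃ a ∈ α.atoms, ∃ σ : Var → Name,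
    sortPreserving σ ∧ a.lhs.applySub σ = GTerm.prim p}

/-- A literal: an atom or a negated atom. -/
def isLiteral : LLFormula → Prop
  | atom _ => True
  | neg (atom _) => True
  | _ => False

/-- A disjunction of literals. -/
def isClauseF : LLFormula → Prop
  | or α β => α.isClauseF ∧ β.isClauseF
  | α => α.isLiteral

/-- A universally quantified disjunction of literals `∀x1 ... ∀xj c`
    (where `∀x α` abbreviates `¬∃x¬α`). -/
def isUnivClause : LLFormula → Prop
  | neg (ex _ (neg α)) => α.isUnivClause
  | α => α.isClauseF

/-- Proper⁺: a conjunction of universally quantified clauses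
    (where `α ∧ β` abbreviates `¬(¬α ∨ ¬β)`). -/
def isProperPlus : LLFormula → Prop
  | neg (or (neg α) (neg β)) => α.isProperPlus ∧ β.isProperPlus
  | α => α.isUnivClause

/-- The conjuncts of a conjunction. -/
def conjuncts : LLFormula → Set LLFormula
  | neg (or (neg α) (neg β)) => α.conjuncts ∪ β.conjuncts
  | α => {α}

/-- Strip outer universal quantifiers. -/
def stripForall : LLFormula → LLFormula
  | neg (ex _ (neg α)) => α.stripForall
  | α => α

/-- The literals (polarity and atom) of a disjunction of literals. -/
def clauseLits : LLFormula → Finset (Bool × Atom)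
  | atom a => {(true, a)}
  | neg (atom a) => {(false, a)}
  | or α β => α.clauseLits ∪ β.clauseLits
  | _ => ∅

/-- `gnd φ` for a proper⁺ `φ`: the setup of all ground instances of its clauses. -/
def gnd (φ : LLFormula) : Setup :=
  {c | ∃ ψ ∈ φ.conjuncts, ∃ σ : Var → Name, sortPreserving σ ∧
        c = (ψ.stripForall.clauseLits).image fun p => Atom.applySub σ p.1 p.2}

def msize : LLFormula → ℕ
  | atom _ => 1
  | neg α => 2 * α.msize + 1
  | or α β => α.msize + β.msize + 1
  | ex _ α => α.msize + 1
  | K k α => α.msize + k + 1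
  | M k α => α.msize + k + 1
  | O α => α.msize + 1
  | G α => α.msize + 1

theorem msize_subst (x : Var) (n : Name) :
    ∀ α : LLFormula, (α.subst x n).msize = α.msize := by
  intro α
  induction α with
  | atom a => rfl
  | neg α ih => simp [subst, msize, ih]
  | or α β ih1 ih2 => simp [subst, msize, ih1, ih2]
  | ex y α ih =>
    simp only [subst]
    split <;> simp [msize, ih]
  | K k α ih => simp [subst, msize, ih]
  | M k α ih => simp [subst, msize, ih]
  | O α ih => simp [subst, msize, ih]
  | G α ih => simp [subst, msize, ih]

end LLFormula

/-- The setup of unit clauses corresponding to a set of literals. -/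
def litsSetup (v : Set GLit) : Setup := {c | ∃ l ∈ v, c = ({l} : Clause)}

def GTerm.mapNames (π : Name → Name) : GTerm → GTerm
  | .name n => .name (π n)
  | .prim t => .prim ⟨t.fn, t.args.map π⟩

def GLit.mapNames (π : Name → Name) (l : GLit) : GLit :=
  ⟨l.pos, l.lhs.mapNames π, π l.rhs⟩

/-- Two ground literals are isomorphic when one results from the other by a
    sort-preserving bijection of standard names. -/
def GLit.iso (l1 l2 : GLit) : Prop :=
  ∃ π : Name → Name, Function.Bijective π ∧ (∀ n : Name, (π n).sort = n.sort) ∧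
    l2 = l1.mapNames π

/-- `v ⊎_s ℓ`: add to `v` all literals isomorphic to `ℓ` whose negation is not in
    `VP (s ∪ v)`. -/
def uplusV (s : Setup) (v : Set GLit) (l : GLit) : Set GLit :=
  v ∪ {l' | GLit.iso l l' ∧ ({l'.negate} : Clause) ∉ VP (s ∪ litsSetup v)}

/-- `c` mentions the primitive term `p`. -/
def Clause.mentions (c : Clause) (p : PrimTerm) : Prop :=
  ∃ l ∈ c, l.lhs = GTerm.prim p

/-- `s0|_T`: the least set of clauses such that every clause of `WP s0` that mentions
    a term of `T`, or is empty, or shares a term with another clause of `s0|_T`,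
    is in `s0|_T`. -/
inductive RestrictMem (s0 : Setup) (T : Set PrimTerm) : Clause → Prop
  | ofT {c : Clause} : c ∈ WP s0 → (∃ p ∈ T, c.mentions p) → RestrictMem s0 T c
  | empty {c : Clause} : c ∈ WP s0 → c = ∅ → RestrictMem s0 T c
  | share {c c' : Clause} : c ∈ WP s0 → RestrictMem s0 T c' →
      (∃ p : PrimTerm, c.mentions p ∧ c'.mentions p) → RestrictMem s0 T c

def restrict (s0 : Setup) (T : Set PrimTerm) : Setup := {c | RestrictMem s0 T c}

/-- Semantics of LL: `LLSat s0 s v α` is `s0, s, v ⊨s α`. -/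
def LLSat : Setup → Setup → Set GLit → LLFormula → Prop
  | _, s, _, .atom a =>
    match a.toGLit? true with
    | some g => ({g} : Clause) ∈ VP s
    | none => False
  | _, s, _, .neg (.atom a) =>
    match a.toGLit? false with
    | some g => ({g} : Clause) ∈ VP s
    | none => False
  | s0, s, v, .or α β =>
    match (LLFormula.or α β).asClause? with
    | some c => c ∈ VP s
    | none => LLSat s0 s v α ∨ LLSat s0 s v β
  | s0, s, v, .ex x α => ∃ n : Name, n.sort = x.sort ∧ LLSat s0 s v (α.subst x n)
  | s0, s, v, .neg (.or α β) => LLSat s0 s v (.neg α) ∧ LLSat s0 s v (.neg β)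
  | s0, s, v, .neg (.ex x α) =>
      ∀ n : Name, n.sort = x.sort → LLSat s0 s v (.neg (α.subst x n))
  | s0, s, v, .neg (.neg α) => LLSat s0 s v α
  | s0, s, v, .neg (.K k α) => ¬ LLSat s0 s v (.K k α)
  | s0, s, v, .neg (.M k α) => ¬ LLSat s0 s v (.M k α)
  | s0, s, v, .neg (.O α) => ¬ LLSat s0 s v (.O α)
  | s0, s, v, .neg (.G α) => LLSat s0 s v (.G (.neg α))
  | s0, _, v, .K 0 α =>
      obviouslyIncons (s0 ∪ litsSetup v) ∨ LLSat s0 (s0 ∪ litsSetup v) ∅ α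
  | s0, s, v, .K (k+1) α =>
      ∃ t : PrimTerm, ∀ n : Name, n.sort = t.sort →
        LLSat s0 s (v ∪ {⟨true, GTerm.prim t, n⟩}) (.K k α)
  | s0, _, v, .M 0 α =>
      ¬ potentiallyIncons (s0 ∪ litsSetup v) ∧ LLSat s0 (s0 ∪ litsSetup v) ∅ α
  | s0, s, v, .M (k+1) α =>
      ∃ t : PrimTerm, ∃ n : Name, n.sort = t.sort ∧
        (LLSat s0 s (v ∪ {⟨true, GTerm.prim t, n⟩}) (.M k α) ∨
         LLSat s0 s (uplusV s0 v ⟨true, GTerm.prim t, n⟩) (.M k α))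
  | s0, _, _, .O φ =>
      LLSat s0 s0 ∅ φ ∧ ¬ ∃ t0 : Setup, VP t0 ⊂ VP s0 ∧ LLSat s0 t0 ∅ φ
  | s0, s, v, .G α => LLSat (restrict s0 α.primTerms) s v α
termination_by s0 s v α => α.msize
decreasing_by
  all_goals simp only [LLFormula.msize, LLFormula.msize_subst]
  all_goals omega

/-- Entailment between subjective LL sentences: truth in all setups. -/
def LLEntails (σ τ : LLFormula) : Prop :=
  ∀ (s0 s : Setup), LLSat s0 s ∅ σ → LLSat s0 s ∅ τ

namespace World

variable (w : World)

theorem eqHolds_functional {t : GTerm} {n₁ n₂ : Name}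
    (h₁ : w.eqHolds t n₁) (h₂ : w.eqHolds t n₂) : n₁ = n₂ := by
  cases t <;> exact h₁.symm.trans h₂

theorem sort_eq_of_eqHolds {t : GTerm} {n : Name} (h : w.eqHolds t n) : t.sort = n.sort := by
  cases t with
  | name m => exact congrArg Name.sort h
  | prim p => exact (w.sort_eq p).symm.trans (congrArg Name.sort h)

theorem satLit_iff {l : GLit} : w.satLit l ↔ (w.eqHolds l.lhs l.rhs ↔ l.pos = true) := by
  unfold satLit
  cases l.pos <;> simp

theorem satLit_of_valid {l : GLit} (h : l.valid) : w.satLit l := by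
  rw [satLit_iff]
  rcases h with ⟨hpos, hlhs⟩ | ⟨hpos, n, hlhs, hne⟩ | ⟨hpos, hsort⟩
  · simp [hpos, hlhs, eqHolds]
  · simp [hpos, hlhs, eqHolds, hne]
  · simpa [hpos] using mt w.sort_eq_of_eqHolds hsort

theorem not_satLit_of_compl {l l' : GLit} (hl : w.satLit l) (hc : l'.compl l) :
    ¬ w.satLit l' := by
  intro hl'
  rcases hc with ⟨hlhs, hrhs, hpos⟩ | ⟨hpos', hpos, hlhs, hrhs⟩
  · rw [satLit_iff, hlhs, hrhs] at hl'
    rw [satLit_iff] at hl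
    cases h : l.pos <;> cases h' : l'.pos <;> simp_all
  · rw [satLit_iff, hpos] at hl
    rw [satLit_iff, hpos', hlhs] at hl'
    exact hrhs (w.eqHolds_functional (hl'.mpr rfl) (hl.mpr rfl))

theorem satClause_unitProp {c : Clause} {l : GLit} (hc : w.satClause c) (hl : w.satLit l) :
    w.satClause (c.unitProp l) := by
  obtain ⟨l', hl'c, hl'⟩ := hc
  refine ⟨l', ?_, hl'⟩
  simp only [Clause.unitProp, Finset.mem_filter]
  exact ⟨hl'c, fun hcompl => w.not_satLit_of_compl hl hcompl hl'⟩

theorem satClause_of_mem_UP {s : Setup} (hs : ∀ c ∈ s, w.satClause c) {c : Clause}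
    (hc : c ∈ UP s) : w.satClause c := by
  induction hc with
  | base h => exact hs _ h
  | validLit h => exact ⟨_, Finset.mem_singleton_self _, w.satLit_of_valid h⟩
  | unitProp _ _ ihc ihl =>
    obtain ⟨l, hl, hsat⟩ := ihl
    rw [Finset.mem_singleton] at hl
    exact w.satClause_unitProp ihc (hl ▸ hsat)

end World

/-- An obviously inconsistent setup is satisfied by no world. -/
theorem obviouslyIncons_unsat (s : Setup) (h : obviouslyIncons s) :
    ¬ ∃ w : World, ∀ c ∈ s, w.satClause c := by
  rintro ⟨w, hw⟩
  obtain ⟨l, hl, -⟩ := w.satClause_of_mem_UP hw h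
  exact Finset.notMem_empty l hl
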